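/- arXiv:2402.01473 — 2 statements merged into one kernel-verified Lean document; each statement's English description precedes it below -/
import Mathlib

section
/- If u solves u' = λu + g and Q_j(x) = Σ_{k=0}^{j} x^k/k!, then the degree-R Taylor expansion of u at t evaluated with step h equals Q_R(hλ) u(t) + Σ_{j=0}^{R-1} (g^(j)(t)/λ^{j+1}) (Q_R(hλ) − Q_j(hλ)), i.e., Σ_{k=0}^{R} (h^k/k!) u^(k)(t) = Q_R(hλ) u(t) + Σ_{j=0}^{R-1} (g^(j)(t)/λ^{j+1})(Q_R(hλ) − Q_j(hλ)). -/
/-- The truncated exponential `Q_j(x) = ∑_{k=0}^{j} x^k/k!`. -/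
noncomputable def Qpoly (j : ℕ) (x : ℂ) : ℂ :=
  ∑ k ∈ Finset.range (j + 1), x ^ k / (k.factorial : ℂ)

lemma iter_formula (lam : ℂ) (g u : ℝ → ℂ) (hg : ContDiff ℝ (⊤ : ℕ∞) g)
    (hu : ∀ t, HasDerivAt u (lam * u t + g t) t) (k : ℕ) :
    iteratedDeriv k u = fun t =>
      lam ^ k * u t + ∑ j ∈ Finset.range k, lam ^ (k - 1 - j) * iteratedDeriv j g t := by
  induction k with
  | zero => simp [iteratedDeriv_zero]
  | succ k ih =>
      funext t
      rw [iteratedDeriv_succ, ih]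
      have hgj : ∀ j, HasDerivAt (iteratedDeriv j g) (iteratedDeriv (j + 1) g t) t := by
        intro j
        have hd : DifferentiableAt ℝ (iteratedDeriv j g) t :=
          (hg.differentiable_iteratedDeriv j (by exact_mod_cast ENat.coe_lt_top j)) t
        have := hd.hasDerivAt
        rwa [← iteratedDeriv_succ] at this
      have hder : HasDerivAt
          (fun t => lam ^ k * u t + ∑ j ∈ Finset.range k, lam ^ (k - 1 - j) * iteratedDeriv j g t)
          (lam ^ k * (lam * u t + g t)
            + ∑ j ∈ Finset.range k, lam ^ (k - 1 - j) * iteratedDeriv (j + 1) g t) t := by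
        exact ((hu t).const_mul _).add
          (HasDerivAt.fun_sum fun j _ => (hgj j).const_mul _)
      rw [hder.deriv]
      rw [Finset.sum_range_succ']
      have hexp : ∀ j ∈ Finset.range k,
          lam ^ (k + 1 - 1 - (j + 1)) * iteratedDeriv (j + 1) g t
            = lam ^ (k - 1 - j) * iteratedDeriv (j + 1) g t := by
        intro j hj
        congr 2
        omega
      rw [Finset.sum_congr rfl hexp]
      simp only [iteratedDeriv_zero, Nat.add_sub_cancel, Nat.sub_zero]
      ring

theorem stmt_1 (lam : ℂ) (hlam : lam ≠ 0) (g u : ℝ → ℂ)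
    (hg : ContDiff ℝ (⊤ : ℕ∞) g)
    (hu : ∀ t, HasDerivAt u (lam * u t + g t) t)
    (h : ℝ) (R : ℕ) (t : ℝ) :
    ∑ k ∈ Finset.range (R + 1), ((h : ℂ) ^ k / (k.factorial : ℂ)) * iteratedDeriv k u t
      = Qpoly R (h * lam) * u t
        + ∑ j ∈ Finset.range R,
            (iteratedDeriv j g t / lam ^ (j + 1)) * (Qpoly R (h * lam) - Qpoly j (h * lam)) := by
  have key := iter_formula lam g u hg hu
  -- abbreviations
  set F : ℕ → ℕ → ℂ := fun j k =>
    ((h : ℂ) ^ k / (k.factorial : ℂ)) * (lam ^ (k - 1 - j) * iteratedDeriv j g t) with hF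
  have step1 : ∑ k ∈ Finset.range (R + 1), ((h : ℂ) ^ k / (k.factorial : ℂ)) * iteratedDeriv k u t
      = Qpoly R (h * lam) * u t
        + ∑ k ∈ Finset.range (R + 1), ∑ j ∈ Finset.range k, F j k := by
    have : ∀ k, iteratedDeriv k u t
        = lam ^ k * u t + ∑ j ∈ Finset.range k, lam ^ (k - 1 - j) * iteratedDeriv j g t := by
      intro k; rw [key k]
    simp only [this, mul_add, Finset.mul_sum, Finset.sum_add_distrib]
    congr 1
    · rw [Qpoly, Finset.sum_mul]
      apply Finset.sum_congr rfl
      intro k _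
      rw [mul_pow]
      field_simp
  rw [step1]
  congr 1
  -- swap the double sum
  have swap : ∑ k ∈ Finset.range (R + 1), ∑ j ∈ Finset.range k, F j k
      = ∑ j ∈ Finset.range (R + 1), ∑ k ∈ Finset.Ico (j + 1) (R + 1), F j k := by
    have := Finset.sum_Ico_Ico_comm' 0 (R + 1) F
    simp only [Nat.Ico_zero_eq_range] at this
    exact this.symm
  rw [swap, Finset.sum_range_succ, Finset.Ico_self, Finset.sum_empty, add_zero]
  apply Finset.sum_congr rfl
  intro j hj
  rw [Finset.mem_range] at hj
  have hQ : Qpoly R (h * lam) - Qpoly j (h * lam)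
      = ∑ k ∈ Finset.Ico (j + 1) (R + 1), ((h : ℂ) * lam) ^ k / (k.factorial : ℂ) := by
    rw [Qpoly, Qpoly, eq_comm, Finset.sum_Ico_eq_sub _ (by omega)]
  rw [hQ, Finset.mul_sum]
  apply Finset.sum_congr rfl
  intro k hk
  rw [Finset.mem_Ico] at hk
  have hpow : lam ^ k = lam ^ (k - 1 - j) * lam ^ (j + 1) := by
    rw [← pow_add]
    congr 1
    omega
  have hfac : (k.factorial : ℂ) ≠ 0 := Nat.cast_ne_zero.mpr (Nat.factorial_ne_zero k)
  rw [hF, mul_pow, hpow]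
  field_simp
end

section
/- Faà di Bruno's formula: if f : ℝ → ℝ and u : ℝ → ℝ are r times continuously differentiable, then (f ∘ u)^(r)(t) = Σ over multi-indices s = (s_1,…,s_r) with Σ_ν ν s_ν = r of (r!/(s_1!⋯s_r!)) f^(|s|)(u(t)) Π_{j=1}^{r} (u^(j)(t)/j!)^{s_j}, where |s| = s_1 + ⋯ + s_r. -/
/-!
Induction on `r`. Write the `r`-th derivative as `∑ r!/s! · f^{(|s|)}(u) · ∏ (u^{(ν)}/ν!)^{s_ν}`
over the partitions `s` of `r`, `s_ν` counting the parts of size `ν`. Differentiating a term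
either raises the order of `f` (chain rule: a new part of size `1`) or differentiates one factor
`u^{(ν)}/ν!`, which gives `(ν + 1) · u^{(ν+1)}/(ν+1)!` and turns a part of size `ν` into one of
size `ν + 1`. Collecting the contributions to a partition `s'` of `r + 1` according to the part
that was created or enlarged, the part of size `ν` contributes `ν s'_ν · r!/s'!`, and these add
up to `(r + 1)!/s'!` because `∑ ν s'_ν = r + 1`.
-/

open Finset
open scoped Nat

namespace FaaDiBruno

noncomputable section

/-- The paper's `P_r`, shifted by one index: `s j` is the number of parts of size `j + 1`. -/
def partitionTypes (r : ℕ) : Finset (ℕ →₀ ℕ) :=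
  ((range r).finsupp fun _ => range (r + 1)).filter fun s => s.weight (· + 1) = r

def factorialProd (s : ℕ →₀ ℕ) : ℕ := s.prod fun _ k => k !

section Combinatorics

variable {r : ℕ} {s : ℕ →₀ ℕ}

lemma lt_of_weight_eq (hs : s.weight (· + 1) = r) {j : ℕ} (hj : s j ≠ 0) : j < r :=
  hs ▸ Finsupp.le_weight_of_ne_zero' (· + 1) hj

lemma mem_partitionTypes : s ∈ partitionTypes r ↔ s.weight (· + 1) = r := by
  refine mem_filter.trans ⟨And.right, fun hs => ⟨Finset.mem_finsupp_iff.2 ⟨?_, ?_⟩, hs⟩⟩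
  · intro j hj
    exact mem_range.2 (lt_of_weight_eq hs (Finsupp.mem_support_iff.1 hj))
  · intro j _
    exact mem_range.2 (Nat.lt_succ_of_le (hs ▸ Finsupp.le_weight _ (Nat.succ_ne_zero j) s))

lemma support_subset_range_of_mem (hs : s ∈ partitionTypes r) : s.support ⊆ range r :=
  fun _ hj => mem_range.2 (lt_of_weight_eq (mem_partitionTypes.1 hs) (Finsupp.mem_support_iff.1 hj))

lemma degree_le_of_mem (hs : s ∈ partitionTypes r) : s.degree ≤ r := by
  rw [← mem_partitionTypes.1 hs, Finsupp.degree_eq_weight_one]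
  exact Finsupp.sum_le_sum fun j _ => by simpa using Nat.le_mul_of_pos_right (s j) j.succ_pos

lemma partitionTypes_zero : partitionTypes 0 = {0} := by
  ext s
  refine ⟨fun hs => mem_singleton.2 ?_, fun hs => ?_⟩
  · simpa using support_subset_range_of_mem hs
  · rw [mem_singleton.1 hs, mem_partitionTypes, map_zero]

lemma factorialProd_add_single (s : ℕ →₀ ℕ) (i : ℕ) :
    factorialProd (s + Finsupp.single i 1) = (s i + 1) * factorialProd s := by
  unfold factorialProd
  rw [← Finsupp.mul_prod_erase' s i _ (fun _ => rfl),
    ← Finsupp.mul_prod_erase' (s + Finsupp.single i 1) i _ (fun _ => rfl)]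
  simp [Finsupp.erase_add, Nat.factorial_succ, mul_assoc]

lemma factorialProd_pos (s : ℕ →₀ ℕ) : 0 < factorialProd s :=
  Finset.prod_pos fun _ _ => Nat.factorial_pos _

lemma weight_add_single (s : ℕ →₀ ℕ) (i : ℕ) :
    (s + Finsupp.single i 1).weight (· + 1) = s.weight (· + 1) + (i + 1) := by
  simp [Finsupp.weight_single]

/-- Removing one part of size `i + 1` is a bijection onto the partition types of `m`, and it
absorbs the weight `s i` into the factorials. -/
lemma sum_apply_div_factorialProd_mul {n m i : ℕ} (hn : n = m + (i + 1)) (h : (ℕ →₀ ℕ) → ℝ) :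
    ∑ s ∈ partitionTypes n, (s i : ℝ) / factorialProd s * h s
      = ∑ q ∈ partitionTypes m, h (q + Finsupp.single i 1) / factorialProd q := by
  have hcoeff (q : ℕ →₀ ℕ) : ((q + Finsupp.single i 1 : ℕ →₀ ℕ) i : ℝ)
      / factorialProd (q + Finsupp.single i 1) = 1 / factorialProd q := by
    have := (factorialProd_pos q).ne'
    rw [factorialProd_add_single]
    field_simp
    simp
  symm
  calc ∑ q ∈ partitionTypes m, h (q + Finsupp.single i 1) / factorialProd q
      = ∑ s ∈ (partitionTypes m).map (addRightEmbedding (Finsupp.single i 1)),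
          (s i : ℝ) / factorialProd s * h s := by
        rw [sum_map]
        refine sum_congr rfl fun q _ => ?_
        rw [addRightEmbedding_apply, hcoeff]
        ring
    _ = ∑ s ∈ partitionTypes n, (s i : ℝ) / factorialProd s * h s := by
        refine sum_subset (fun s hs => ?_) fun s hs hs' => ?_
        · obtain ⟨q, hq, rfl⟩ := mem_map.1 hs
          rw [mem_partitionTypes, addRightEmbedding_apply, weight_add_single,
            mem_partitionTypes.1 hq, hn]
        · suffices s i = 0 by simp [this]
          by_contra hi
          refine hs' (mem_map.2 ⟨s - Finsupp.single i 1, mem_partitionTypes.2 ?_,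
            Finsupp.sub_add_single_one_cancel hi⟩)
          have := Finsupp.weight_sub_single_add (w := (· + 1)) hi
          rw [mem_partitionTypes.1 hs] at this
          omega

lemma cast_weight_eq_sum_range {N : ℕ} (hs : s.support ⊆ range N) :
    ((s.weight (· + 1) : ℕ) : ℝ) = ∑ j ∈ range N, ((j : ℝ) + 1) * s j := by
  rw [Finsupp.weight_apply, Finsupp.sum_of_support_subset s hs _ fun i _ => zero_smul ℕ (i + 1),
    Nat.cast_sum]
  exact sum_congr rfl fun j _ => by simp [mul_comm]

theorem sum_partitionTypes_succ (r : ℕ) (g : (ℕ →₀ ℕ) → ℝ) :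
    ∑ s ∈ partitionTypes (r + 1), ((r + 1)! : ℝ) / factorialProd s * g s
      = ∑ s ∈ partitionTypes r, (r ! : ℝ) / factorialProd s *
          (g (s + Finsupp.single 0 1) + ∑ j ∈ range r,
            (s j * ((j : ℝ) + 2)) * g (s - Finsupp.single j 1 + Finsupp.single (j + 1) 1)) := by
  have hweight (s) (hs : s ∈ partitionTypes (r + 1)) :
      ((r + 1 : ℕ) : ℝ) = ∑ j ∈ range (r + 1), ((j : ℝ) + 1) * s j := by
    rw [← cast_weight_eq_sum_range (support_subset_range_of_mem hs), mem_partitionTypes.1 hs]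
  have hmove (j : ℕ) (hj : j ∈ range r) :
      ∑ s ∈ partitionTypes r, (s j : ℝ) / factorialProd s *
          g (s - Finsupp.single j 1 + Finsupp.single (j + 1) 1)
        = ∑ q ∈ partitionTypes (r - (j + 1)),
            g (q + Finsupp.single (j + 1) 1) / factorialProd q := by
    rw [sum_apply_div_factorialProd_mul (m := r - (j + 1)) (by have := mem_range.1 hj; omega)]
    simp only [add_tsub_cancel_right]
  have henlarge (j : ℕ) (hj : j ∈ range r) :
      ∑ s ∈ partitionTypes (r + 1), (s (j + 1) : ℝ) / factorialProd s * g s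
        = ∑ q ∈ partitionTypes (r - (j + 1)), g (q + Finsupp.single (j + 1) 1) / factorialProd q :=
    sum_apply_div_factorialProd_mul (by have := mem_range.1 hj; omega) g
  calc ∑ s ∈ partitionTypes (r + 1), ((r + 1)! : ℝ) / factorialProd s * g s
      = ∑ j ∈ range (r + 1), (r ! : ℝ) * ((j + 1) *
          ∑ s ∈ partitionTypes (r + 1), (s j : ℝ) / factorialProd s * g s) := by
        simp only [mul_sum]
        rw [sum_comm]
        refine sum_congr rfl fun s hs => ?_
        rw [Nat.factorial_succ, Nat.cast_mul, hweight s hs, sum_mul, sum_div, sum_mul]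
        exact sum_congr rfl fun j _ => by ring
    _ = (r ! : ℝ) * (∑ q ∈ partitionTypes r, g (q + Finsupp.single 0 1) / factorialProd q
          + ∑ j ∈ range r, ((j : ℝ) + 2) * ∑ s ∈ partitionTypes r, (s j : ℝ) / factorialProd s *
              g (s - Finsupp.single j 1 + Finsupp.single (j + 1) 1)) := by
        rw [sum_range_succ', add_comm, mul_add]
        congr 1
        · rw [sum_apply_div_factorialProd_mul (m := r) (by ring)]
          push_cast
          ring
        · rw [mul_sum]
          refine sum_congr rfl fun j hj => ?_
          rw [henlarge j hj, hmove j hj]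
          push_cast
          ring
    _ = _ := by
        simp only [mul_add, sum_add_distrib, mul_sum]
        congr 1
        · exact sum_congr rfl fun s _ => by ring
        · rw [sum_comm]
          exact sum_congr rfl fun j _ => sum_congr rfl fun s _ => by ring

end Combinatorics

section Analysis

lemma hasDerivAt_iteratedDeriv {𝕜 F : Type*} [NontriviallyNormedField 𝕜] [NormedAddCommGroup F]
    [NormedSpace 𝕜 F] {f : 𝕜 → F} {n : WithTop ℕ∞} {m : ℕ} (hf : ContDiff 𝕜 n f) (hm : m < n)
    (x : 𝕜) : HasDerivAt (iteratedDeriv m f) (iteratedDeriv (m + 1) f x) x := by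
  rw [iteratedDeriv_succ]
  exact (hf.differentiable_iteratedDeriv m hm x).hasDerivAt

theorem hasDerivAt_prod_pow {ι 𝕜 : Type*} [DecidableEq ι] [NontriviallyNormedField 𝕜]
    {V : ι → 𝕜 → 𝕜} {V' : ι → 𝕜} {s : ι →₀ ℕ} {S : Finset ι} {t : 𝕜}
    (hS : s.support ⊆ S) (hV : ∀ j ∈ S, HasDerivAt (V j) (V' j) t) :
    HasDerivAt (fun x => s.prod fun j n => V j x ^ n)
      (∑ j ∈ S, s j * V' j * (s - Finsupp.single j 1).prod fun k n => V k t ^ n) t := by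
  have hprod : (fun x => s.prod fun j n => V j x ^ n) = fun x => ∏ j ∈ S, V j x ^ s j :=
    funext fun x => Finsupp.prod_of_support_subset s hS _ fun _ _ => pow_zero _
  rw [hprod]
  refine (HasDerivAt.fun_finsetProd fun j hj => (hV j hj).pow (s j)).congr_deriv
    (sum_congr rfl fun j hj => ?_)
  rw [Finsupp.prod_of_support_subset _ (Finsupp.support_tsub.trans hS) _ fun _ _ => pow_zero _,
    ← mul_prod_erase S _ hj, smul_eq_mul]
  have herase : ∏ k ∈ S.erase j, V k t ^ (s - Finsupp.single j 1 : ι →₀ ℕ) k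
      = ∏ k ∈ S.erase j, V k t ^ s k := prod_congr rfl fun k hk => by
    rw [Finsupp.tsub_apply, Finsupp.single_eq_of_ne (ne_of_mem_erase hk), tsub_zero]
  rw [herase, Finsupp.tsub_apply, Finsupp.single_eq_same]
  simp only [Pi.pow_apply]
  ring

/-- `taylorCoeff u t j` is the paper's `u^{(ν)}(t) / ν!` for `ν = j + 1`. -/
def taylorCoeff (u : ℝ → ℝ) (t : ℝ) (j : ℕ) : ℝ := iteratedDeriv (j + 1) u t / (j + 1)!

lemma hasDerivAt_taylorCoeff {u : ℝ → ℝ} {n j : ℕ} (hu : ContDiff ℝ n u) (hj : j + 1 < n)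
    (t : ℝ) : HasDerivAt (taylorCoeff u · j) ((j + 2) * taylorCoeff u t (j + 1)) t := by
  refine ((hasDerivAt_iteratedDeriv hu (by exact_mod_cast hj) t).div_const _).congr_deriv ?_
  rw [taylorCoeff, Nat.factorial_succ (j + 1)]
  push_cast
  field_simp
  ring

lemma hasDerivAt_taylorCoeff_zero {u : ℝ → ℝ} {n : ℕ} (hu : ContDiff ℝ n u) (hn : 0 < n)
    (t : ℝ) : HasDerivAt u (taylorCoeff u t 0) t := by
  simpa [taylorCoeff] using hasDerivAt_iteratedDeriv (m := 0) hu (by exact_mod_cast hn) t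

def faaTerm (f u : ℝ → ℝ) (t : ℝ) (s : ℕ →₀ ℕ) : ℝ :=
  iteratedDeriv s.degree f (u t) * s.prod fun j n => taylorCoeff u t j ^ n

lemma faaTerm_add_single (f u : ℝ → ℝ) (t : ℝ) (q : ℕ →₀ ℕ) (i : ℕ) :
    faaTerm f u t (q + Finsupp.single i 1)
      = iteratedDeriv (q.degree + 1) f (u t) * taylorCoeff u t i
          * q.prod fun j n => taylorCoeff u t j ^ n := by
  rw [faaTerm, map_add, Finsupp.degree_single,
    Finsupp.prod_add_index' (fun _ => pow_zero _) fun _ _ _ => pow_add _ _ _,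
    Finsupp.prod_single_index (by simp), pow_one]
  ring

variable {f u : ℝ → ℝ} {r : ℕ}

lemma hasDerivAt_faaTerm (hf : ContDiff ℝ (r + 1) f) (hu : ContDiff ℝ (r + 1) u) {s : ℕ →₀ ℕ}
    (hs : s ∈ partitionTypes r) (t : ℝ) :
    HasDerivAt (faaTerm f u · s)
      (faaTerm f u t (s + Finsupp.single 0 1) + ∑ j ∈ range r,
        (s j * ((j : ℝ) + 2)) * faaTerm f u t (s - Finsupp.single j 1 + Finsupp.single (j + 1) 1))
      t := by
  have hX : HasDerivAt (fun x => iteratedDeriv s.degree f (u x))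
      (iteratedDeriv (s.degree + 1) f (u t) * taylorCoeff u t 0) t :=
    (hasDerivAt_iteratedDeriv hf (by exact_mod_cast Nat.lt_succ_of_le (degree_le_of_mem hs))
      (u t)).comp t (hasDerivAt_taylorCoeff_zero hu r.succ_pos t)
  have hM := hasDerivAt_prod_pow (support_subset_range_of_mem hs) fun j hj =>
    hasDerivAt_taylorCoeff (n := r + 1) (j := j) hu (by have := mem_range.1 hj; omega) t
  refine (hX.mul hM).congr_deriv ?_
  rw [faaTerm_add_single, mul_sum]
  congr 1
  refine sum_congr rfl fun j _ => ?_
  rcases eq_or_ne (s j) 0 with hj | hj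
  · simp [hj]
  · have hdeg : (s - Finsupp.single j 1).degree + 1 = s.degree := by
      conv_rhs => rw [← Finsupp.sub_add_single_one_cancel hj]
      rw [map_add, Finsupp.degree_single]
    rw [faaTerm_add_single, hdeg]
    ring

theorem iteratedDeriv_comp_eq_sum_partitionTypes (hf : ContDiff ℝ r f) (hu : ContDiff ℝ r u)
    (t : ℝ) :
    iteratedDeriv r (f ∘ u) t
      = ∑ s ∈ partitionTypes r, (r ! : ℝ) / factorialProd s * faaTerm f u t s := by
  induction r generalizing t with
  | zero => simp [partitionTypes_zero, faaTerm, factorialProd]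
  | succ r ih =>
    have hr : ((r : ℕ) : WithTop ℕ∞) ≤ (r + 1 : ℕ) := by exact_mod_cast r.le_succ
    rw [iteratedDeriv_succ, funext (ih (hf.of_le hr) (hu.of_le hr)), sum_partitionTypes_succ]
    exact (HasDerivAt.fun_sum fun s hs => (hasDerivAt_faaTerm hf hu hs t).const_mul _).deriv

end Analysis

section FinIndexing

variable {r : ℕ}

def ofFin (s : Fin r → Fin (r + 1)) : ℕ →₀ ℕ :=
  (Finsupp.equivFunOnFinite.symm fun j => (s j : ℕ)).embDomain Fin.valEmbedding

def toFin (σ : ℕ →₀ ℕ) : Fin r → Fin (r + 1) := fun j => Fin.ofNat (r + 1) (σ j)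

@[to_additive]
lemma prod_ofFin {M : Type*} [CommMonoid M] (s : Fin r → Fin (r + 1)) {g : ℕ → ℕ → M}
    (hg : ∀ j, g j 0 = 1) : (ofFin s).prod g = ∏ j : Fin r, g j (s j) := by
  rw [ofFin, Finsupp.prod_embDomain, Finsupp.prod_fintype _ _ fun _ => hg _]
  rfl

lemma weight_ofFin (s : Fin r → Fin (r + 1)) :
    (ofFin s).weight (· + 1) = ∑ ν : Fin r, (ν.1 + 1) * (s ν).1 := by
  rw [Finsupp.weight_apply, sum_ofFin s fun _ => by simp]
  simp [mul_comm]

lemma ofFin_toFin {σ : ℕ →₀ ℕ} (hσ : σ ∈ partitionTypes r) : ofFin (toFin (r := r) σ) = σ := by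
  ext n
  rcases lt_or_ge n r with hn | hn
  · have := Finsupp.le_weight _ (Nat.succ_ne_zero n) σ
    rw [mem_partitionTypes.1 hσ] at this
    rw [show n = Fin.valEmbedding ⟨n, hn⟩ from rfl, ofFin, Finsupp.embDomain_apply_self]
    simp [toFin, Nat.mod_eq_of_lt (Nat.lt_succ_of_le this)]
  · rw [ofFin, Finsupp.embDomain_of_notMem_range _ _ _ (by simpa using hn)]
    by_contra h
    have := mem_range.1 (support_subset_range_of_mem hσ (Finsupp.mem_support_iff.2 (Ne.symm h)))
    omega

lemma toFin_ofFin (s : Fin r → Fin (r + 1)) : toFin (ofFin s) = s := by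
  funext j
  rw [toFin, show (j : ℕ) = Fin.valEmbedding j from rfl, ofFin, Finsupp.embDomain_apply_self]
  simp

lemma sum_partitionTypes_eq_sum_fin (G : (ℕ →₀ ℕ) → ℝ) :
    ∑ σ ∈ partitionTypes r, G σ
      = ∑ s : Fin r → Fin (r + 1),
          if ∑ ν : Fin r, (ν.1 + 1) * (s ν).1 = r then G (ofFin s) else 0 := by
  rw [← sum_filter]
  refine sum_nbij' toFin ofFin (fun σ hσ => ?_) (fun s hs => ?_) (fun σ hσ => ofFin_toFin hσ)
    (fun s _ => toFin_ofFin s) (fun σ hσ => by rw [ofFin_toFin hσ])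
  · rw [mem_filter, ← weight_ofFin, ofFin_toFin hσ, ← mem_partitionTypes]
    exact ⟨mem_univ _, hσ⟩
  · rw [mem_partitionTypes, weight_ofFin]
    exact (mem_filter.1 hs).2

lemma faaTerm_ofFin (f u : ℝ → ℝ) (t : ℝ) (s : Fin r → Fin (r + 1)) :
    faaTerm f u t (ofFin s)
      = iteratedDeriv (∑ j, (s j : ℕ)) f (u t) * ∏ j : Fin r, taylorCoeff u t j ^ (s j : ℕ) := by
  rw [faaTerm, Finsupp.degree_eq_weight_one, Finsupp.weight_apply,
    sum_ofFin s fun _ => by simp, prod_ofFin s fun _ => pow_zero _]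
  simp

lemma factorialProd_ofFin (s : Fin r → Fin (r + 1)) :
    factorialProd (ofFin s) = ∏ j, (s j : ℕ)! :=
  prod_ofFin s fun _ => rfl

end FinIndexing

end

end FaaDiBruno

theorem stmt_5 (r : ℕ) (f u : ℝ → ℝ)
    (hf : ContDiff ℝ r f) (hu : ContDiff ℝ r u) (t : ℝ) :
    iteratedDeriv r (f ∘ u) t
      = ∑ s : Fin r → Fin (r + 1),
          if (∑ ν : Fin r, (ν.1 + 1) * (s ν).1) = r then
            ((r.factorial : ℝ) / ∏ j : Fin r, ((s j).1.factorial : ℝ))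
              * iteratedDeriv (∑ j : Fin r, (s j).1) f (u t)
              * ∏ j : Fin r, (iteratedDeriv (j.1 + 1) u t / ((j.1 + 1).factorial : ℝ)) ^ (s j).1
          else 0 := by
  rw [FaaDiBruno.iteratedDeriv_comp_eq_sum_partitionTypes hf hu,
    FaaDiBruno.sum_partitionTypes_eq_sum_fin]
  refine Finset.sum_congr rfl fun s _ => ?_
  rw [FaaDiBruno.faaTerm_ofFin, FaaDiBruno.factorialProd_ofFin]
  push_cast
  simp only [FaaDiBruno.taylorCoeff, mul_assoc]
end
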